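/- Let h ∈ (1/2,1) and T > 2 be fixed real numbers. Then there exists a constant c > 0 such that for every integer n ≥ 0 one has Σ_{j=−∞}^{n} 2^{j(1−h)} √(log(3 + |j| + 2^{j} T)) ≤ c · 2^{n(1−h)} · √( log(3 + 2^{n} T) · log(3 + n) ), where the series on the left-hand side converges. -/

import Mathlib

/-!
Substituting `j = n - k` with `k ≥ 0`, the `k`-th term is `2^{n(1-h)} r^k √(log(3 + |n-k| + 2^{n-k} T))`
with `r = 2^{-(1-h)} < 1`. Since `3 + |n-k| + 2^{n-k} T ≤ (3 + 2^n T)(3 + n)(3 + k)`, the logarithm is at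
most `L + M + log(3+k)` with `L = log(3 + 2^n T)`, `M = log(3 + n)`, all three at least `1`, hence at most
`L M (3+k)^2`. The sum is thus dominated by `2^{n(1-h)} √(L M) ∑ (3+k) r^k`.
-/

open Real

lemma one_le_log_three_add {x : ℝ} (hx : 0 ≤ x) : 1 ≤ log (3 + x) := by
  rw [le_log_iff_exp_le (by linarith)]
  linarith [exp_one_lt_three]

lemma add_add_le_three_mul_mul {a b c : ℝ} (ha : 1 ≤ a) (hb : 1 ≤ b) (hc : 1 ≤ c) :
    a + b + c ≤ 3 * (a * b * c) := by
  have hab : 1 ≤ a * b := one_le_mul_of_one_le_of_one_le ha hb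
  nlinarith [mul_le_mul_of_nonneg_left hc (by linarith : (0 : ℝ) ≤ a * b)]

lemma log_three_add_abs_sub_add_rpow_le {x y T : ℝ} (hx : 0 ≤ x) (hy : 0 ≤ y) (hT : 0 ≤ T) :
    log (3 + |x - y| + 2 ^ (x - y) * T) ≤ log (3 + 2 ^ x * T) + log (3 + x) + log (3 + y) := by
  have hpow : 2 ^ (x - y) * T ≤ 2 ^ x * T :=
    mul_le_mul_of_nonneg_right (rpow_le_rpow_of_exponent_le one_le_two (by linarith)) hT
  have habs : |x - y| ≤ x + y := (abs_sub x y).trans_eq (by rw [abs_of_nonneg hx, abs_of_nonneg hy])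
  have hA : 0 ≤ 2 ^ x * T := by positivity
  rw [← log_mul (by positivity) (by positivity), ← log_mul (by positivity) (by positivity)]
  refine log_le_log (by positivity) ?_
  nlinarith [mul_nonneg hA hx, mul_nonneg hA hy, mul_nonneg (mul_nonneg hA hx) hy, mul_nonneg hx hy]

lemma sqrt_log_three_add_abs_sub_add_rpow_le {x y T : ℝ} (hx : 0 ≤ x) (hy : 0 ≤ y) (hT : 0 ≤ T) :
    √(log (3 + |x - y| + 2 ^ (x - y) * T)) ≤ √(log (3 + 2 ^ x * T) * log (3 + x)) * (3 + y) := by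
  have hL := one_le_log_three_add (by positivity : (0 : ℝ) ≤ 2 ^ x * T)
  have hM := one_le_log_three_add hx
  have hK := one_le_log_three_add hy
  have hK' : 3 * log (3 + y) ≤ (3 + y) ^ 2 := by
    nlinarith [log_le_sub_one_of_pos (by linarith : (0 : ℝ) < 3 + y)]
  have hLM : 0 ≤ log (3 + 2 ^ x * T) * log (3 + x) := by positivity
  rw [← sqrt_sq (by linarith : (0 : ℝ) ≤ 3 + y), ← sqrt_mul hLM]
  refine sqrt_le_sqrt ?_
  calc log (3 + |x - y| + 2 ^ (x - y) * T)
      ≤ log (3 + 2 ^ x * T) + log (3 + x) + log (3 + y) :=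
        log_three_add_abs_sub_add_rpow_le hx hy hT
    _ ≤ 3 * (log (3 + 2 ^ x * T) * log (3 + x) * log (3 + y)) := add_add_le_three_mul_mul hL hM hK
    _ = log (3 + 2 ^ x * T) * log (3 + x) * (3 * log (3 + y)) := by ring
    _ ≤ log (3 + 2 ^ x * T) * log (3 + x) * (3 + y) ^ 2 := mul_le_mul_of_nonneg_left hK' hLM

lemma rpow_sub_natCast_mul {b : ℝ} (hb : 0 < b) (x s : ℝ) (k : ℕ) :
    b ^ ((x - k) * s) = b ^ (x * s) * (b ^ (-s)) ^ k := by
  rw [← rpow_natCast, ← rpow_mul hb.le, ← rpow_add hb]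
  ring_nf

lemma summable_add_mul_geometric (a : ℝ) {r : ℝ} (h0 : 0 ≤ r) (h1 : r < 1) :
    Summable (fun k : ℕ => (a + k) * r ^ k) := by
  have hgeom := (summable_geometric_of_lt_one h0 h1).mul_left a
  have harith : Summable (fun k : ℕ => (k : ℝ) * r ^ k) := by
    simpa using summable_pow_mul_geometric_of_norm_lt_one 1 (r := r) (by rwa [norm_of_nonneg h0])
  simpa [add_mul] using hgeom.add harith

def Int.natEquivLe (n : ℤ) : ℕ ≃ {j : ℤ // j ≤ n} where
  toFun k := ⟨n - k, by omega⟩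
  invFun j := (n - j).toNat
  left_inv k := by simp
  right_inv j := Subtype.ext (by have := j.2; simp only; omega)

lemma summable_and_tsum_le_of_equiv {α β : Type*} {f : β → ℝ} {g : α → ℝ} (e : α ≃ β)
    (hf : ∀ b, 0 ≤ f b) (hfg : ∀ a, f (e a) ≤ g a) (hg : Summable g) :
    Summable f ∧ ∑' b, f b ≤ ∑' a, g a := by
  have hfe : Summable (f ∘ e) := hg.of_nonneg_of_le (fun a => hf (e a)) hfg
  refine ⟨e.summable_iff.mp hfe, ?_⟩
  rw [← e.tsum_eq f]
  exact hfe.tsum_le_tsum hfg hg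

theorem sum_pow_sqrt_log_bound (h T : ℝ) (hh : h ∈ Set.Ioo (1 / 2 : ℝ) 1) (hT : 2 < T) :
    ∃ c : ℝ, 0 < c ∧ ∀ n : ℕ,
      Summable (fun j : {j : ℤ // j ≤ (n : ℤ)} =>
        (2 : ℝ) ^ (((j : ℤ) : ℝ) * (1 - h)) *
          Real.sqrt (Real.log (3 + |((j : ℤ) : ℝ)| + (2 : ℝ) ^ ((j : ℤ) : ℝ) * T))) ∧
      (∑' j : {j : ℤ // j ≤ (n : ℤ)},
          (2 : ℝ) ^ (((j : ℤ) : ℝ) * (1 - h)) *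
            Real.sqrt (Real.log (3 + |((j : ℤ) : ℝ)| + (2 : ℝ) ^ ((j : ℤ) : ℝ) * T)))
        ≤ c * (2 : ℝ) ^ ((n : ℝ) * (1 - h)) *
            Real.sqrt (Real.log (3 + (2 : ℝ) ^ (n : ℝ) * T) * Real.log (3 + (n : ℝ))) := by
  set r : ℝ := 2 ^ (-(1 - h))
  have hr0 : 0 < r := by positivity
  have hr1 : r < 1 := rpow_lt_one_of_one_lt_of_neg one_lt_two (by linarith [hh.2])
  have hw := summable_add_mul_geometric 3 hr0.le hr1
  refine ⟨∑' k : ℕ, (3 + k) * r ^ k, hw.tsum_pos (fun k => by positivity) 0 (by positivity),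
    fun n => ?_⟩
  set D := (2 : ℝ) ^ ((n : ℝ) * (1 - h)) * √(log (3 + 2 ^ (n : ℝ) * T) * log (3 + n))
  have hterm (k : ℕ) : (2 : ℝ) ^ (((n : ℝ) - k) * (1 - h)) *
      √(log (3 + |(n : ℝ) - k| + 2 ^ ((n : ℝ) - k) * T)) ≤ D * ((3 + k) * r ^ k) := by
    rw [rpow_sub_natCast_mul two_pos]
    calc _ ≤ 2 ^ ((n : ℝ) * (1 - h)) * r ^ k *
          (√(log (3 + 2 ^ (n : ℝ) * T) * log (3 + n)) * (3 + k)) :=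
          mul_le_mul_of_nonneg_left (sqrt_log_three_add_abs_sub_add_rpow_le (by positivity)
            (by positivity) (by linarith)) (by positivity)
      _ = D * ((3 + k) * r ^ k) := by ring
  refine (summable_and_tsum_le_of_equiv (Int.natEquivLe n) (fun j => by positivity)
    (fun k => by simpa [Int.natEquivLe] using hterm k) (hw.mul_left D)).imp_right
    fun hle => hle.trans_eq ?_
  rw [tsum_mul_left]
  ring
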